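/- Lyapunov decrease along the rotational closed-loop error dynamics: let J be a symmetric positive definite real 3×3 matrix and k_R, k_ω > 0. Let R, R_d : ℝ → M_3(ℝ) be differentiable with values in SO(3), and ω, ω_d : ℝ → ℝ^3 differentiable, satisfying R'(t) = R(t)[ω(t)]_×, R_d'(t) = R_d(t)[ω_d(t)]_×, and J e_ω'(t) = −k_R e_R(t) − k_ω e_ω(t), where e_R(t) = (1/2)(R_d(t)ᵀR(t) − R(t)ᵀR_d(t))∨ and e_ω(t) = ω(t) − R(t)ᵀR_d(t) ω_d(t). Then the function V_2(t) = (1/2)⟨e_ω(t), J e_ω(t)⟩ + k_R Ψ(R(t), R_d(t)) is differentiable with V_2'(t) = −k_ω ‖e_ω(t)‖^2 for all t; in particular V_2 is nonincreasing. -/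

import Mathlib

open Real Matrix

attribute [local instance] Matrix.normedAddCommGroup Matrix.normedSpace

/-- `SO(3)`: real 3×3 matrices `Q` with `Qᵀ Q = I` and `det Q = 1`. -/
def SO3 (Q : Matrix (Fin 3) (Fin 3) ℝ) : Prop :=
  Qᵀ * Q = 1 ∧ Q.det = 1

/-- The hat map `[x]_×`: the skew-symmetric matrix with `[x]_× y = x × y`. -/
noncomputable def hat (x : EuclideanSpace ℝ (Fin 3)) : Matrix (Fin 3) (Fin 3) ℝ :=
  !![0, -x 2, x 1; x 2, 0, -x 0; -x 1, x 0, 0]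

/-- The attitude error function `Ψ(R, R_d) = (1/2) tr(I − R_dᵀ R)`. -/
noncomputable def Psi (R Rd : Matrix (Fin 3) (Fin 3) ℝ) : ℝ :=
  (1 / 2 : ℝ) * (1 - Rdᵀ * R).trace

/-- The attitude error vector `e_R = (1/2) (R_dᵀ R − Rᵀ R_d)∨`, where `∨` is the
vee map from skew-symmetric matrices to `ℝ³`. -/
noncomputable def errVec (R Rd : Matrix (Fin 3) (Fin 3) ℝ) : EuclideanSpace ℝ (Fin 3) :=
  (1 / 2 : ℝ) • (WithLp.toLp 2 ![(Rdᵀ * R - Rᵀ * Rd) 2 1, (Rdᵀ * R - Rᵀ * Rd) 0 2,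
    (Rdᵀ * R - Rᵀ * Rd) 1 0] : EuclideanSpace ℝ (Fin 3))

/-- The angular velocity error `e_ω = ω − Rᵀ R_d ω_d`. -/
noncomputable def errOmega (R Rd : Matrix (Fin 3) (Fin 3) ℝ)
    (ω ωd : EuclideanSpace ℝ (Fin 3)) : EuclideanSpace ℝ (Fin 3) :=
  ω - (show EuclideanSpace ℝ (Fin 3) from WithLp.toLp 2 ((Rᵀ * Rd).mulVec ωd))

lemma so3_fixed (Q : Matrix (Fin 3) (Fin 3) ℝ) (h1 : Qᵀ * Q = 1) (h2 : Q.det = 1) :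
    ∀ i, Q.mulVec ![Q 2 1 - Q 1 2, Q 0 2 - Q 2 0, Q 1 0 - Q 0 1] i
      = ![Q 2 1 - Q 1 2, Q 0 2 - Q 2 0, Q 1 0 - Q 0 1] i := by
  have hadj : Q.adjugate = Qᵀ := by
    calc Q.adjugate = (Qᵀ * Q) * Q.adjugate := by rw [h1, one_mul]
    _ = Qᵀ * (Q * Q.adjugate) := by rw [Matrix.mul_assoc]
    _ = Qᵀ * (Q.det • 1) := by rw [Matrix.mul_adjugate]
    _ = Qᵀ := by rw [h2, one_smul, mul_one]
  rw [Matrix.adjugate_fin_three Q] at hadj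
  have c21 := (congrFun (congrFun hadj 2) 1).symm
  have c12 := (congrFun (congrFun hadj 1) 2).symm
  have c02 := (congrFun (congrFun hadj 0) 2).symm
  have c20 := (congrFun (congrFun hadj 2) 0).symm
  have c10 := (congrFun (congrFun hadj 1) 0).symm
  have c01 := (congrFun (congrFun hadj 0) 1).symm
  simp at c21 c12 c02 c20 c10 c01
  intro i
  fin_cases i <;>
    simp [Matrix.mulVec, dotProduct, Fin.sum_univ_three, Matrix.vecHead, Matrix.vecTail]
  · linear_combination c21 - c12
  · linear_combination c02 - c20
  · linear_combination c10 - c01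

lemma psi_dot (A B : Matrix (Fin 3) (Fin 3) ℝ)
    (hA1 : Aᵀ * A = 1) (hA2 : A.det = 1) (hB1 : Bᵀ * B = 1) (hB2 : B.det = 1)
    (x y : EuclideanSpace ℝ (Fin 3)) :
    (-(1:ℝ)/2) * (∑ i, ∑ k, ((B * hat y) k i * A k i + B k i * (A * hat x) k i)) =
      inner ℝ (errVec A B)
        (x - (show EuclideanSpace ℝ (Fin 3) from WithLp.toLp 2 ((Aᵀ * B).mulVec y))) := by
  set Q := Bᵀ * A with hQdef
  have hBB : B * Bᵀ = 1 := mul_eq_one_comm.mp hB1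
  have hQ1 : Qᵀ * Q = 1 := by
    rw [hQdef, Matrix.transpose_mul, Matrix.transpose_transpose, Matrix.mul_assoc,
      ← Matrix.mul_assoc B, hBB, Matrix.one_mul, hA1]
  have hQ2 : Q.det = 1 := by
    rw [hQdef, Matrix.det_mul, Matrix.det_transpose, hB2, hA2, one_mul]
  have hfix := so3_fixed Q hQ1 hQ2
  have f0 := hfix 0
  have f1 := hfix 1
  have f2 := hfix 2
  simp [hQdef, Matrix.mulVec, dotProduct, Matrix.mul_apply,
    Fin.sum_univ_three, Matrix.vecHead, Matrix.vecTail] at f0 f1 f2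
  simp [errVec, hat, inner, Matrix.mulVec, dotProduct, Matrix.mul_apply,
    Fin.sum_univ_three, Matrix.sub_apply, Matrix.vecHead, Matrix.vecTail]
  linear_combination (1/2 * y 0) * f0 + (1/2 * y 1) * f1 + (1/2 * y 2) * f2

noncomputable def entryCLM (i j : Fin 3) : Matrix (Fin 3) (Fin 3) ℝ →L[ℝ] ℝ :=
  LinearMap.toContinuousLinearMap
    { toFun := fun M => M i j
      map_add' := fun _ _ => rfl
      map_smul' := fun _ _ => rfl }

lemma entry_hasDerivAt {R : ℝ → Matrix (Fin 3) (Fin 3) ℝ} {M : Matrix (Fin 3) (Fin 3) ℝ}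
    {t : ℝ} (h : HasDerivAt R M t) (i j : Fin 3) :
    HasDerivAt (fun s => R s i j) (M i j) t :=
  (entryCLM i j).hasFDerivAt.comp_hasDerivAt t h

lemma euc_differentiable {f : ℝ → EuclideanSpace ℝ (Fin 3)}
    (h : ∀ i, Differentiable ℝ (fun s => f s i)) : Differentiable ℝ f := by
  have : f = fun s => (PiLp.continuousLinearEquiv 2 ℝ (fun _ : Fin 3 => ℝ)).symm
      (fun i => f s i) := rfl
  rw [this]
  exact (PiLp.continuousLinearEquiv 2 ℝ _).symm.differentiable.comp
    (differentiable_pi.mpr h)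

lemma Psi_eq (A B : Matrix (Fin 3) (Fin 3) ℝ) :
    Psi A B = (1/2 : ℝ) * (3 - ∑ i, ∑ k, B k i * A k i) := by
  simp [Psi, Matrix.trace, Matrix.diag, Fin.sum_univ_three, Matrix.mul_apply,
    Matrix.sub_apply, Matrix.one_apply]

/-- **Lyapunov decrease along the rotational closed-loop error dynamics**: with `J`
symmetric positive definite, `k_R, k_ω > 0`, attitude kinematics `R' = R[ω]_×`,
`R_d' = R_d[ω_d]_×`, and closed-loop dynamics `J e_ω' = −k_R e_R − k_ω e_ω`, the
Lyapunov function `V₂ = (1/2)⟨e_ω, J e_ω⟩ + k_R Ψ(R, R_d)` is differentiable with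
`V₂' = −k_ω ‖e_ω‖²`; in particular `V₂` is nonincreasing. -/
theorem lyapunov_decrease (J : Matrix (Fin 3) (Fin 3) ℝ) (hJ : J.PosDef)
    (kR kω : ℝ) (hkR : 0 < kR) (hkω : 0 < kω)
    (R Rd : ℝ → Matrix (Fin 3) (Fin 3) ℝ) (ω ωd : ℝ → EuclideanSpace ℝ (Fin 3))
    (hRso : ∀ t, SO3 (R t)) (hRdso : ∀ t, SO3 (Rd t))
    (hR : ∀ t, HasDerivAt R (R t * hat (ω t)) t)
    (hRd : ∀ t, HasDerivAt Rd (Rd t * hat (ωd t)) t)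
    (hω : Differentiable ℝ ω) (hωd : Differentiable ℝ ωd)
    (hdyn : ∀ t,
      (show EuclideanSpace ℝ (Fin 3) from
        WithLp.toLp 2 (J.mulVec (WithLp.ofLp
          (deriv (fun s => errOmega (R s) (Rd s) (ω s) (ωd s)) t : EuclideanSpace ℝ (Fin 3)))))
      = -(kR • errVec (R t) (Rd t)) - kω • errOmega (R t) (Rd t) (ω t) (ωd t)) :
    (∀ t, HasDerivAt
      (fun s => (1 / 2 : ℝ) * (inner ℝ (errOmega (R s) (Rd s) (ω s) (ωd s))
          (show EuclideanSpace ℝ (Fin 3) from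
            WithLp.toLp 2 (J.mulVec (errOmega (R s) (Rd s) (ω s) (ωd s)))) : ℝ)
        + kR * Psi (R s) (Rd s))
      (-(kω * ‖errOmega (R t) (Rd t) (ω t) (ωd t)‖ ^ 2)) t) ∧
    Antitone (fun s => (1 / 2 : ℝ) * (inner ℝ (errOmega (R s) (Rd s) (ω s) (ωd s))
          (show EuclideanSpace ℝ (Fin 3) from
            WithLp.toLp 2 (J.mulVec (errOmega (R s) (Rd s) (ω s) (ωd s)))) : ℝ)
        + kR * Psi (R s) (Rd s)) := by
  set E := fun s => errOmega (R s) (Rd s) (ω s) (ωd s) with hEdef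
  -- entry differentiabilities
  have hRdiff : ∀ k i : Fin 3, Differentiable ℝ (fun s => R s k i) :=
    fun k i t => (entry_hasDerivAt (hR t) k i).differentiableAt
  have hRddiff : ∀ k i : Fin 3, Differentiable ℝ (fun s => Rd s k i) :=
    fun k i t => (entry_hasDerivAt (hRd t) k i).differentiableAt
  have hωdcomp : ∀ j : Fin 3, Differentiable ℝ (fun s => ωd s j) := fun j => by
    exact Differentiable.comp (EuclideanSpace.proj j (𝕜 := ℝ)).differentiable hωd
  have hωcomp : ∀ j : Fin 3, Differentiable ℝ (fun s => ω s j) := fun j => by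
    exact Differentiable.comp (EuclideanSpace.proj j (𝕜 := ℝ)).differentiable hω
  have hEdiff : Differentiable ℝ E := by
    apply euc_differentiable
    intro i
    have : (fun s => E s i)
        = fun s => ω s i - ∑ j, (∑ k, R s k i * Rd s k j) * ωd s j := rfl
    rw [this]
    exact (hωcomp i).sub (Differentiable.fun_sum fun j _ =>
      ((Differentiable.fun_sum fun k _ => (hRdiff k i).mul (hRddiff k j)).mul (hωdcomp j)))
  -- the continuous linear map given by J
  set T : EuclideanSpace ℝ (Fin 3) →L[ℝ] EuclideanSpace ℝ (Fin 3) :=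
    LinearMap.toContinuousLinearMap (Matrix.toEuclideanLin J) with hTdef
  have hTapp : ∀ v : EuclideanSpace ℝ (Fin 3),
      T v = (show EuclideanSpace ℝ (Fin 3) from WithLp.toLp 2 (J.mulVec v)) := fun v => rfl
  -- symmetry of J
  have hsym : ∀ u v : EuclideanSpace ℝ (Fin 3),
      (inner ℝ u (T v) : ℝ) = inner ℝ v (T u) := by
    intro u v
    have hJs : ∀ i j : Fin 3, J i j = J j i := by
      intro i j
      have := congrFun (congrFun hJ.1 i) j
      simpa [Matrix.conjTranspose_apply] using this.symm
    simp only [hTapp]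
    simp [inner, Matrix.mulVec, dotProduct, Fin.sum_univ_three]
    rw [hJs 0 1, hJs 0 2, hJs 1 2]
    ring
  have hd : ∀ t, HasDerivAt
      (fun s => (1 / 2 : ℝ) * (inner ℝ (E s)
          (show EuclideanSpace ℝ (Fin 3) from WithLp.toLp 2 (J.mulVec (E s))) : ℝ)
        + kR * Psi (R s) (Rd s))
      (-(kω * ‖E t‖ ^ 2)) t := by
    intro t
    obtain ⟨D, hDdef⟩ : ∃ D : EuclideanSpace ℝ (Fin 3), deriv E t = D := ⟨_, rfl⟩
    have hE : HasDerivAt E D t := hDdef ▸ (hEdiff t).hasDerivAt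
    have hTE : HasDerivAt (fun s => T (E s)) (T (D)) t :=
      T.hasFDerivAt.comp_hasDerivAt t hE
    have hIn : HasDerivAt (fun s => (inner ℝ (E s) (T (E s)) : ℝ))
        ((inner ℝ (E t) (T (D)) : ℝ) + inner ℝ (D) (T (E t))) t :=
      hE.inner ℝ hTE
    have h1 : HasDerivAt (fun s => (1 / 2 : ℝ) * (inner ℝ (E s)
          (show EuclideanSpace ℝ (Fin 3) from WithLp.toLp 2 (J.mulVec (E s))) : ℝ))
        ((1/2 : ℝ) * ((inner ℝ (E t) (T (D)) : ℝ) + inner ℝ (D) (T (E t)))) t := by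
      have hfun : (fun s => (1 / 2 : ℝ) * (inner ℝ (E s) (T (E s)) : ℝ))
          = fun s => (1 / 2 : ℝ) * (inner ℝ (E s)
            (show EuclideanSpace ℝ (Fin 3) from WithLp.toLp 2 (J.mulVec (E s))) : ℝ) := by
        funext s; rw [hTapp]
      rw [← hfun]
      exact hIn.const_mul (1/2 : ℝ)
    -- Psi part
    have hF : HasDerivAt (fun s => ∑ i : Fin 3, ∑ k : Fin 3, Rd s k i * R s k i)
        (∑ i : Fin 3, ∑ k : Fin 3,
          ((Rd t * hat (ωd t)) k i * R t k i + Rd t k i * (R t * hat (ω t)) k i)) t :=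
      HasDerivAt.fun_sum fun i _ => HasDerivAt.fun_sum fun k _ =>
        (entry_hasDerivAt (hRd t) k i).mul (entry_hasDerivAt (hR t) k i)
    have h2 : HasDerivAt (fun s => kR * Psi (R s) (Rd s))
        (kR * ((1/2 : ℝ) * (0 - ∑ i : Fin 3, ∑ k : Fin 3,
          ((Rd t * hat (ωd t)) k i * R t k i + Rd t k i * (R t * hat (ω t)) k i)))) t := by
      have hfun : (fun s => kR * Psi (R s) (Rd s))
          = fun s => kR * ((1/2 : ℝ) * (3 - ∑ i, ∑ k, Rd s k i * R s k i)) := by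
        funext s; rw [Psi_eq]
      rw [hfun]
      exact (((hasDerivAt_const t (3:ℝ)).sub hF).const_mul (1/2 : ℝ)).const_mul kR
    have hsum := h1.add h2
    -- compute the value
    have hE2 := ((PiLp.continuousLinearEquiv 2 ℝ
        (fun _ : Fin 3 => ℝ)).toContinuousLinearMap).hasFDerivAt.comp_hasDerivAt t hE
    have h3 : HasDerivAt E (D) t := hE
    have h4 : deriv E t = D := h3.deriv
    have hdynt := hdyn t
    rw [h4] at hdynt
    have hTd : T (D) = -(kR • errVec (R t) (Rd t)) - kω • E t := by
      rw [hTapp]; exact hdynt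
    have hpd := psi_dot (R t) (Rd t) (hRso t).1 (hRso t).2 (hRdso t).1 (hRdso t).2
      (ω t) (ωd t)
    have hval : (1/2 : ℝ) * ((inner ℝ (E t) (T (D)) : ℝ)
          + inner ℝ (D) (T (E t)))
        + kR * ((1/2 : ℝ) * (0 - ∑ i : Fin 3, ∑ k : Fin 3,
          ((Rd t * hat (ωd t)) k i * R t k i + Rd t k i * (R t * hat (ω t)) k i)))
        = -(kω * ‖E t‖ ^ 2) := by
      have hc : (inner ℝ (D) (T (E t)) : ℝ) = inner ℝ (E t) (T (D)) :=
        hsym (D) (E t)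
      have hpd' : (-1/2 : ℝ) * (∑ i : Fin 3, ∑ k : Fin 3,
          ((Rd t * hat (ωd t)) k i * R t k i + Rd t k i * (R t * hat (ω t)) k i))
          = inner ℝ (errVec (R t) (Rd t)) (E t) := hpd
      have hcomm : (inner ℝ (E t) (errVec (R t) (Rd t)) : ℝ)
          = inner ℝ (errVec (R t) (Rd t)) (E t) := real_inner_comm _ _
      rw [hc, hTd]
      simp only [inner_sub_right, inner_neg_right, real_inner_smul_right,
        real_inner_self_eq_norm_sq]
      linear_combination kR * hpd' - kR * hcomm
    rw [hval] at hsum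
    exact hsum
  refine ⟨hd, ?_⟩
  apply antitone_of_deriv_nonpos
  · exact fun t => (hd t).differentiableAt
  · intro x
    rw [(hd x).deriv]
    have : (0:ℝ) ≤ kω * ‖E x‖ ^ 2 := by positivity
    linarith
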